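/- On the unit sphere S² in E³, let Q be a quarter of a spherical disk of (spherical) radius Δ ∈ (0, π/2): the spherical convex hull of a center point c and two points a, b with |ca| = |cb| = Δ and the angle at c between the arcs ca and cb equal to π/2. Then the circumradius of Q (the smallest ρ such that Q is contained in a spherical disk of radius ρ) equals arctan(√2 · tan(Δ/2)). -/

import Mathlib

/-!
Put `k = cos Δ`. Then `⟪c, a⟫ = ⟪c, b⟫ = k`, and the right angle at `c` gives `⟪a, b⟫ = k²`.
The vector `v = c + (1 - k)⁻¹ • (a + b)` has the same inner product `T = (1 + k) / (1 - k)` with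
the three vertices, so `o = v / ‖v‖` is equidistant from them; caps of radius below `π / 2` are
spherically convex, so the cap about `o` through the vertices covers `Q`. Conversely, if the cap
of radius `ρ` about a unit vector `o'` contains the vertices, then with `W = 1 + 2 (1 - k)⁻¹` the
sum of the weights, `W cos ρ ≤ ⟪o', v⟫ ≤ ‖v‖`, and `‖v‖² = W T`. Hence the circumradius has cosine
`‖v‖ / W = √((1 + k) / (3 - k))`, which is the cosine of `arctan (√2 tan (Δ / 2))`.
-/

open scoped RealInnerProductSpace

/-- Spherical distance between unit vectors of `E³`. -/
noncomputable def sdist (p q : EuclideanSpace ℝ (Fin 3)) : ℝ := Real.arccos ⟪p, q⟫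

open Real Set

section InnerProductSpace

variable {E : Type*} [NormedAddCommGroup E] [InnerProductSpace ℝ E]

def radialProjection (S : Set E) : Set E := {p | ∃ x ∈ S, x ≠ 0 ∧ p = ‖x‖⁻¹ • x}

lemma norm_eq_one_of_mem_radialProjection {S : Set E} {p : E} (hp : p ∈ radialProjection S) :
    ‖p‖ = 1 := by
  obtain ⟨x, -, hx0, rfl⟩ := hp
  rw [norm_smul, norm_inv, norm_norm, inv_mul_cancel₀ (norm_ne_zero_iff.mpr hx0)]

lemma mem_radialProjection_of_norm_eq_one {S : Set E} {u : E} (hu : u ∈ S) (hu1 : ‖u‖ = 1) :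
    u ∈ radialProjection S :=
  ⟨u, hu, norm_ne_zero_iff.mp (by rw [hu1]; exact one_ne_zero), by rw [hu1, inv_one, one_smul]⟩

/-- Spherical caps of radius at most `π / 2` are spherically convex. -/
lemma le_inner_of_mem_radialProjection_convexHull {S : Set E} {o p : E} {t : ℝ} (ht : 0 ≤ t)
    (hS : ∀ u ∈ S, ‖u‖ ≤ 1 ∧ t ≤ ⟪o, u⟫) (hp : p ∈ radialProjection (convexHull ℝ S)) :
    t ≤ ⟪o, p⟫ := by
  obtain ⟨x, hx, hx0, rfl⟩ := hp
  have hsub : convexHull ℝ S ⊆ Metric.closedBall 0 1 ∩ {y | t ≤ ⟪o, y⟫} :=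
    convexHull_min (fun u hu ↦ ⟨mem_closedBall_zero_iff.mpr (hS u hu).1, (hS u hu).2⟩)
      ((convex_closedBall 0 1).inter (convex_halfSpace_ge (innerₛₗ ℝ o).isLinear t))
  obtain ⟨hx1, htx⟩ := hsub hx
  have hinv : 1 ≤ ‖x‖⁻¹ :=
    (one_le_inv₀ (norm_pos_iff.mpr hx0)).mpr (mem_closedBall_zero_iff.mp hx1)
  rw [real_inner_smul_right]
  calc t ≤ ⟪o, x⟫ := htx
    _ ≤ ‖x‖⁻¹ * ⟪o, x⟫ := le_mul_of_one_le_left (ht.trans htx) hinv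

section WeightedSum

variable {ι : Type*} [Fintype ι] (w : ι → ℝ) (u : ι → E) {T : ℝ}

lemma real_inner_self_sum_smul_of_forall_inner_eq (hT : ∀ i, ⟪∑ j, w j • u j, u i⟫ = T) :
    ⟪∑ j, w j • u j, ∑ j, w j • u j⟫ = (∑ j, w j) * T := by
  simp only [inner_sum, real_inner_smul_right, hT, Finset.sum_mul]

lemma norm_sum_smul_div_eq_sqrt (hT : ∀ i, ⟪∑ j, w j • u j, u i⟫ = T) (hW : 0 < ∑ j, w j) :
    ‖∑ j, w j • u j‖ / ∑ j, w j = √(T / ∑ j, w j) := by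
  rw [norm_eq_sqrt_real_inner, real_inner_self_sum_smul_of_forall_inner_eq w u hT,
    ← sqrt_sq hW.le, ← sqrt_div' _ (sq_nonneg _), sqrt_sq hW.le]
  congr 1
  field_simp

lemma le_norm_sum_smul_div_of_forall_le_inner {o : E} {t : ℝ} (hw : ∀ i, 0 ≤ w i)
    (hW : 0 < ∑ j, w j) (ho : ‖o‖ = 1) (h : ∀ i, t ≤ ⟪o, u i⟫) :
    t ≤ ‖∑ j, w j • u j‖ / ∑ j, w j := by
  rw [le_div_iff₀ hW]
  calc t * ∑ j, w j = ∑ j, w j * t := by rw [Finset.mul_sum]; simp only [mul_comm]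
    _ ≤ ∑ j, w j * ⟪o, u j⟫ := Finset.sum_le_sum fun j _ ↦ mul_le_mul_of_nonneg_left (h j) (hw j)
    _ = ⟪o, ∑ j, w j • u j⟫ := by simp only [inner_sum, real_inner_smul_right]
    _ ≤ ‖∑ j, w j • u j‖ := by simpa [ho] using real_inner_le_norm o (∑ j, w j • u j)

lemma real_inner_normalize_sum_smul (hT : ∀ i, ⟪∑ j, w j • u j, u i⟫ = T) (hW : 0 < ∑ j, w j)
    (i : ι) : ⟪‖∑ j, w j • u j‖⁻¹ • ∑ j, w j • u j, u i⟫ = ‖∑ j, w j • u j‖ / ∑ j, w j := by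
  have hTeq : T = ‖∑ j, w j • u j‖ ^ 2 / ∑ j, w j := by
    rw [← real_inner_self_eq_norm_sq, real_inner_self_sum_smul_of_forall_inner_eq w u hT]
    field_simp
  rw [real_inner_smul_left, hT, hTeq]
  rcases eq_or_ne ‖∑ j, w j • u j‖ 0 with h | h
  · simp [h]
  · field_simp

end WeightedSum

lemma real_inner_eq_mul_of_inner_sub_smul_eq_zero {a b c : E} (hc : ‖c‖ = 1)
    (h : ⟪a - ⟪a, c⟫ • c, b - ⟪b, c⟫ • c⟫ = 0) : ⟪a, b⟫ = ⟪a, c⟫ * ⟪b, c⟫ := by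
  have hcc : ⟪c, c⟫ = 1 := by rw [real_inner_self_eq_norm_sq, hc, one_pow]
  simp only [inner_sub_left, inner_sub_right, real_inner_smul_left, real_inner_smul_right, hcc,
    real_inner_comm b c] at h
  linear_combination h

lemma real_inner_quarter_disk_center_eq {a b c : E} {k : ℝ} (hk : k ≠ 1) (ha : ‖a‖ = 1)
    (hb : ‖b‖ = 1) (hc : ‖c‖ = 1) (hac : ⟪a, c⟫ = k) (hbc : ⟪b, c⟫ = k) (hab : ⟪a, b⟫ = k ^ 2)
    (i : Fin 3) :
    ⟪∑ j, ![1, (1 - k)⁻¹, (1 - k)⁻¹] j • ![c, a, b] j, ![c, a, b] i⟫ = (1 + k) / (1 - k) := by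
  have h1k : 1 - k ≠ 0 := sub_ne_zero.mpr hk.symm
  fin_cases i <;>
    simp [Fin.sum_univ_three, inner_add_left, real_inner_smul_left, ha, hb, hc,
      real_inner_comm a c, real_inner_comm b c, real_inner_comm a b, hac, hbc, hab] <;>
    field_simp <;> ring

end InnerProductSpace

section Sphere

local notation "E³" => EuclideanSpace ℝ (Fin 3)

noncomputable def circumradius (Q : Set E³) : ℝ :=
  sInf {ρ : ℝ | ∃ o : E³, ‖o‖ = 1 ∧ ∀ p ∈ Q, sdist o p ≤ ρ}

lemma real_inner_eq_cos_of_sdist_eq {p q : E³} {θ : ℝ} (hp : ‖p‖ = 1) (hq : ‖q‖ = 1)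
    (h : sdist p q = θ) : ⟪p, q⟫ = cos θ := by
  obtain ⟨h₁, h₂⟩ := real_inner_mem_Icc_of_norm_eq_one hp hq
  rw [← h, sdist, cos_arccos h₁ h₂]

lemma circumradius_eq_arccos {Q : Set E³} {m : ℝ} (hQ : Q.Nonempty) (hQ1 : ∀ p ∈ Q, ‖p‖ = 1)
    (hcover : ∃ o : E³, ‖o‖ = 1 ∧ ∀ p ∈ Q, m ≤ ⟪o, p⟫)
    (hbest : ∀ (o : E³) (t : ℝ), ‖o‖ = 1 → (∀ p ∈ Q, t ≤ ⟪o, p⟫) → t ≤ m) :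
    circumradius Q = arccos m := by
  refine IsLeast.csInf_eq ⟨?_, ?_⟩
  · obtain ⟨o, ho, hm⟩ := hcover
    exact ⟨o, ho, fun p hp ↦ arccos_le_arccos (hm p hp)⟩
  · rintro ρ ⟨o, ho, hρ⟩
    obtain ⟨p₀, hp₀⟩ := hQ
    rcases le_or_gt π ρ with hπ | hπ
    · exact (arccos_le_pi m).trans hπ
    have hρ0 : 0 ≤ ρ := (arccos_nonneg _).trans (hρ p₀ hp₀)
    have hcos : ∀ p ∈ Q, cos ρ ≤ ⟪o, p⟫ := fun p hp ↦ by
      obtain ⟨h₁, h₂⟩ := real_inner_mem_Icc_of_norm_eq_one ho (hQ1 p hp)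
      simpa [cos_arccos h₁ h₂] using
        cos_le_cos_of_nonneg_of_le_pi (arccos_nonneg _) hπ.le (hρ p hp)
    calc arccos m ≤ arccos (cos ρ) := arccos_le_arccos (hbest o _ ho hcos)
      _ = ρ := arccos_cos hρ0 hπ.le

theorem circumradius_radialProjection_convexHull {ι : Type*} [Fintype ι] (u : ι → E³)
    (hu : ∀ i, ‖u i‖ = 1) (w : ι → ℝ) (hw : ∀ i, 0 ≤ w i) (hW : 0 < ∑ j, w j) {T : ℝ}
    (hT0 : 0 < T) (hT : ∀ i, ⟪∑ j, w j • u j, u i⟫ = T) :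
    circumradius (radialProjection (convexHull ℝ (range u))) = arccos √(T / ∑ j, w j) := by
  rw [← norm_sum_smul_div_eq_sqrt w u hT hW]
  obtain ⟨i₀, -⟩ := Finset.exists_ne_zero_of_sum_ne_zero hW.ne'
  refine circumradius_eq_arccos ⟨u i₀, ?_⟩ (fun p ↦ norm_eq_one_of_mem_radialProjection) ?_ ?_
  · exact mem_radialProjection_of_norm_eq_one (subset_convexHull ℝ _ (mem_range_self i₀)) (hu i₀)
  · refine ⟨‖∑ j, w j • u j‖⁻¹ • ∑ j, w j • u j, ?_,
      fun p hp ↦ le_inner_of_mem_radialProjection_convexHull (by positivity) ?_ hp⟩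
    · refine norm_smul_inv_norm fun hv ↦ (mul_pos hW hT0).ne ?_
      rw [← real_inner_self_sum_smul_of_forall_inner_eq w u hT, hv, inner_zero_left]
    · rintro _ ⟨i, rfl⟩
      exact ⟨(hu i).le, (real_inner_normalize_sum_smul w u hT hW i).ge⟩
  · intro o t ho ht
    exact le_norm_sum_smul_div_of_forall_le_inner w u hw hW ho fun i ↦
      ht _ (mem_radialProjection_of_norm_eq_one (subset_convexHull ℝ _ (mem_range_self i)) (hu i))

end Sphere

lemma arctan_sqrt_two_mul_tan_half_eq_arccos {Δ : ℝ} (h0 : 0 ≤ Δ) (hπ : Δ < π) :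
    arctan (√2 * tan (Δ / 2)) = arccos √((1 + cos Δ) / (3 - cos Δ)) := by
  have htan : 0 ≤ tan (Δ / 2) := tan_nonneg_of_nonneg_of_le_pi_div_two (by linarith) (by linarith)
  have hcos : cos Δ = (1 - tan (Δ / 2) ^ 2) / (1 + tan (Δ / 2) ^ 2) :=
    cos_eq_two_mul_tan_half_div_one_sub_tan_half_sq Δ <| by
      simpa using (cos_lt_cos_of_nonneg_of_le_pi h0 le_rfl hπ).ne'
  calc arctan (√2 * tan (Δ / 2)) = arccos (cos (arctan (√2 * tan (Δ / 2)))) :=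
        (arccos_cos (arctan_nonneg.mpr (by positivity))
          ((arctan_lt_pi_div_two _).le.trans (by linarith))).symm
    _ = arccos √((1 + cos Δ) / (3 - cos Δ)) := by
      rw [cos_arctan, one_div, ← sqrt_inv, hcos, mul_pow, sq_sqrt zero_le_two]
      congr 2
      have : 0 < 1 + tan (Δ / 2) ^ 2 := by positivity
      field_simp
      rw [eq_div_iff (by nlinarith)]
      ring

theorem stmt7 (Δ : ℝ) (hΔ : Δ ∈ Set.Ioo 0 (Real.pi / 2))
    (a b c : EuclideanSpace ℝ (Fin 3))
    (ha : ‖a‖ = 1) (hb : ‖b‖ = 1) (hc : ‖c‖ = 1)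
    (hca : sdist c a = Δ) (hcb : sdist c b = Δ)
    (hright : ⟪a - ⟪a, c⟫ • c, b - ⟪b, c⟫ • c⟫ = 0)
    (Q : Set (EuclideanSpace ℝ (Fin 3)))
    (hQ : Q = {p | ∃ x ∈ convexHull ℝ ({c, a, b} : Set (EuclideanSpace ℝ (Fin 3))),
      x ≠ 0 ∧ p = ‖x‖⁻¹ • x}) :
    sInf {ρ : ℝ | ∃ o : EuclideanSpace ℝ (Fin 3), ‖o‖ = 1 ∧ ∀ p ∈ Q, sdist o p ≤ ρ}
      = Real.arctan (Real.sqrt 2 * Real.tan (Δ / 2)) := by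
  obtain ⟨hΔ0, hΔπ⟩ := hΔ
  set k := cos Δ with hk
  have hk0 : 0 < k := cos_pos_of_mem_Ioo ⟨by linarith, hΔπ⟩
  have hk1 : k < 1 := by simpa using cos_lt_cos_of_nonneg_of_le_pi le_rfl (by linarith) hΔ0
  have hac : ⟪a, c⟫ = k := by rw [real_inner_comm]; exact real_inner_eq_cos_of_sdist_eq hc ha hca
  have hbc : ⟪b, c⟫ = k := by rw [real_inner_comm]; exact real_inner_eq_cos_of_sdist_eq hc hb hcb
  have hab : ⟪a, b⟫ = k ^ 2 := by
    rw [real_inner_eq_mul_of_inner_sub_smul_eq_zero hc hright, hac, hbc, sq]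
  have hQ' : Q = radialProjection (convexHull ℝ (range ![c, a, b])) := by
    rw [hQ, Matrix.range_cons, Matrix.range_cons_cons_empty]; rfl
  change circumradius Q = _
  rw [hQ', circumradius_radialProjection_convexHull _ (by simp [Fin.forall_fin_succ, ha, hb, hc])
      _ (by simp [Fin.forall_fin_succ]; linarith) (by simp [Fin.sum_univ_three]; positivity)
      (div_pos (by linarith) (by linarith))
      (real_inner_quarter_disk_center_eq hk1.ne ha hb hc hac hbc hab),
    arctan_sqrt_two_mul_tan_half_eq_arccos hΔ0.le (by linarith), ← hk]
  congr 2
  simp only [Fin.sum_univ_three, Fin.isValue, Matrix.cons_val_zero, Matrix.cons_val_one,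
    Matrix.cons_val]
  have h1k : 1 - k ≠ 0 := by linarith
  field_simp
  ring
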